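/- arXiv:2410.07602 — 2 statements merged into one kernel-verified Lean document; each statement's English description precedes it below -/
import Mathlib

section
/- In the symmetric centroid path decomposition of a finite DAG with unique source r and sink set W, every directed path in the DAG contains at most 2·⌊log₂ π(r, W)⌋ light edges. -/
/-! Along an edge `u → v`, paths from `r` to `u` extend to paths to `v` and paths from `v` to
`W` extend to paths from `u`, so the first coordinate of `λ` weakly increases, the second
weakly decreases, and on a light edge one of them changes strictly. Hence the potential
`λ₁ - λ₂` increases strictly along light edges; as both coordinates lie in
`[0, ⌊log₂ π(r,W)⌋]`, it ranges over an interval of length `2 ⌊log₂ π(r,W)⌋`. -/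

open scoped Classical

/-- A directed path from `u` to `v` in the graph with edge relation `E`,
represented as the (nonempty) list of visited vertices. -/
def IsDagPath {V : Type*} (E : V → V → Prop) (u v : V) (l : List V) : Prop :=
  l.Chain' E ∧ l.head? = some u ∧ l.getLast? = some v

/-- `π(u,v)`: the number of directed paths from `u` to `v`. -/
noncomputable def pathCount {V : Type*} (E : V → V → Prop) (u v : V) : ℕ :=
  {l : List V | IsDagPath E u v l}.ncard

/-- `π(u,W)`: the number of directed paths from `u` to a vertex of `W`. -/
noncomputable def pathCountTo {V : Type*} (E : V → V → Prop) (u : V) (W : Finset V) : ℕ :=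
  ∑ w ∈ W, pathCount E u w

/-- `λ(v) = (⌊log₂ π(r,v)⌋, ⌊log₂ π(v,W)⌋)`. -/
noncomputable def lamSym {V : Type*} (E : V → V → Prop) (r : V) (W : Finset V) (v : V) :
    ℕ × ℕ :=
  (Nat.log 2 (pathCount E r v), Nat.log 2 (pathCountTo E v W))

/-- An edge `(u,v)` is heavy if `λ(u) = λ(v)`. -/
def HeavyEdge {V : Type*} (E : V → V → Prop) (r : V) (W : Finset V) (u v : V) : Prop :=
  E u v ∧ lamSym E r W u = lamSym E r W v

/-- An edge `(u,v)` is light if it is not heavy. -/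
def LightEdge {V : Type*} (E : V → V → Prop) (r : V) (W : Finset V) (u v : V) : Prop :=
  E u v ∧ lamSym E r W u ≠ lamSym E r W v

/-- The number of light edges occurring along a path given as a list of vertices. -/
noncomputable def lightEdgeCount {V : Type*} (E : V → V → Prop) (r : V) (W : Finset V)
    (l : List V) : ℕ :=
  (l.zip l.tail).countP fun p => decide (LightEdge E r W p.1 p.2)

namespace List

variable {α : Type*}

theorem countP_zip_lt_add_le_getLast (f : α → ℤ) :
    ∀ (x : α) (l : List α), (x :: l).IsChain (fun a b => f a ≤ f b) →
      ((x :: l).zip l).countP (fun p => f p.1 < f p.2) + f x ≤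
        f ((x :: l).getLast (cons_ne_nil x l))
  | x, [], _ => by simp
  | x, y :: l, h => by
    obtain ⟨hxy, hl⟩ := isChain_cons_cons.mp h
    have ih := countP_zip_lt_add_le_getLast f y l hl
    rw [zip_cons_cons, countP_cons, getLast_cons_cons]
    split_ifs with hlt <;> simp only [decide_eq_true_eq] at hlt <;> omega

theorem IsChain.nodup_of_acyclic {E : α → α → Prop} (hacyc : ∀ v, ¬ Relation.TransGen E v v)
    {l : List α} (hl : l.IsChain E) : l.Nodup := by
  have hpair : l.Pairwise (Relation.TransGen E) :=
    isChain_iff_pairwise.mp (hl.imp fun _ _ => .single)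
  exact hpair.imp fun {a _} h => by rintro rfl; exact hacyc a h

end List

section Paths

variable {V : Type*} {E : V → V → Prop}

theorem IsDagPath.append {u v w : V} {l p : List V} (hl : IsDagPath E u v l)
    (hp : IsDagPath E v w p) : IsDagPath E u w (l ++ p.tail) := by
  obtain ⟨hlc, hlh, hll⟩ := hl
  obtain ⟨hpc, hph, hpl⟩ := hp
  obtain ⟨l', rfl⟩ := List.getLast?_eq_some_iff.mp hll
  obtain ⟨p', rfl⟩ := List.head?_eq_some_iff.mp hph
  refine ⟨?_, ?_, ?_⟩
  · exact hlc.append_overlap (l₂ := [v]) hpc (List.cons_ne_nil _ _)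
  · simpa using hlh
  · simpa using hpl

theorem exists_isDagPath_of_reflTransGen {u v : V} (h : Relation.ReflTransGen E u v) :
    ∃ l, IsDagPath E u v l := by
  obtain ⟨l, hc, hlast⟩ := List.exists_isChain_cons_of_relationReflTransGen h
  exact ⟨u :: l, hc, rfl, by rw [List.getLast?_eq_some_getLast (List.cons_ne_nil u l), hlast]⟩

variable [Finite V] (hacyc : ∀ v, ¬ Relation.TransGen E v v)
include hacyc

theorem finite_setOf_isDagPath (u v : V) : {l : List V | IsDagPath E u v l}.Finite :=
  (List.finite_length_le V (Nat.card V)).subset fun _ hl =>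
    (hl.1.nodup_of_acyclic hacyc).length_le_natCard

theorem pathCount_le_of_reflTransGen_right (u : V) {v w : V}
    (h : Relation.ReflTransGen E v w) : pathCount E u v ≤ pathCount E u w := by
  obtain ⟨p, hp⟩ := exists_isDagPath_of_reflTransGen h
  exact Set.ncard_le_ncard_of_injOn (· ++ p.tail) (fun _ hl => hl.append hp)
    (fun _ _ _ _ => List.append_cancel_right) (finite_setOf_isDagPath hacyc u w)

theorem pathCount_le_of_reflTransGen_left {u v : V} (w : V)
    (h : Relation.ReflTransGen E u v) : pathCount E v w ≤ pathCount E u w := by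
  obtain ⟨q, hq⟩ := exists_isDagPath_of_reflTransGen h
  refine Set.ncard_le_ncard_of_injOn (q ++ ·.tail) (fun _ hl => hq.append hl)
    (fun l₁ h₁ l₂ h₂ heq => ?_) (finite_setOf_isDagPath hacyc u w)
  rw [← List.cons_head?_tail h₁.2.1, ← List.cons_head?_tail h₂.2.1,
    List.append_cancel_left heq]

theorem pathCountTo_le_of_reflTransGen {u v : V} (W : Finset V)
    (h : Relation.ReflTransGen E u v) : pathCountTo E v W ≤ pathCountTo E u W :=
  Finset.sum_le_sum fun w _ => pathCount_le_of_reflTransGen_left hacyc w h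

end Paths

noncomputable def lamPotential {V : Type*} (E : V → V → Prop) (r : V) (W : Finset V) (v : V) :
    ℤ :=
  (lamSym E r W v).1 - (lamSym E r W v).2

section SymCPD

variable {V : Type*} [Finite V] {E : V → V → Prop} (hacyc : ∀ v, ¬ Relation.TransGen E v v)
  {r : V} {W : Finset V}
include hacyc

theorem lamSym_fst_le_of_edge {u v : V} (h : E u v) :
    (lamSym E r W u).1 ≤ (lamSym E r W v).1 :=
  Nat.log_mono_right (b := 2) (pathCount_le_of_reflTransGen_right hacyc r (.single h))

theorem lamSym_snd_le_of_edge {u v : V} (h : E u v) :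
    (lamSym E r W v).2 ≤ (lamSym E r W u).2 :=
  Nat.log_mono_right (b := 2) (pathCountTo_le_of_reflTransGen hacyc W (.single h))

theorem lamPotential_le_of_edge {u v : V} (h : E u v) :
    lamPotential E r W u ≤ lamPotential E r W v := by
  have := lamSym_fst_le_of_edge hacyc (r := r) (W := W) h
  have := lamSym_snd_le_of_edge hacyc (r := r) (W := W) h
  unfold lamPotential
  omega

theorem LightEdge.lamPotential_lt {u v : V} (h : LightEdge E r W u v) :
    lamPotential E r W u < lamPotential E r W v := by
  obtain ⟨he, hne⟩ := h
  have := lamSym_fst_le_of_edge hacyc (r := r) (W := W) he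
  have := lamSym_snd_le_of_edge hacyc (r := r) (W := W) he
  rw [Ne, Prod.ext_iff] at hne
  unfold lamPotential
  omega

theorem lamSym_fst_le_log {v : V} (hv : ∃ w ∈ W, Relation.ReflTransGen E v w) :
    (lamSym E r W v).1 ≤ Nat.log 2 (pathCountTo E r W) := by
  obtain ⟨w, hw, hvw⟩ := hv
  exact Nat.log_mono_right (b := 2) <| (pathCount_le_of_reflTransGen_right hacyc r hvw).trans
    (Finset.single_le_sum (fun _ _ => Nat.zero_le _) hw)

theorem lamSym_snd_le_log {v : V} (hv : Relation.ReflTransGen E r v) :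
    (lamSym E r W v).2 ≤ Nat.log 2 (pathCountTo E r W) :=
  Nat.log_mono_right (b := 2) (pathCountTo_le_of_reflTransGen hacyc W hv)

theorem abs_lamPotential_le {v : V} (hrv : Relation.ReflTransGen E r v)
    (hvW : ∃ w ∈ W, Relation.ReflTransGen E v w) :
    |lamPotential E r W v| ≤ Nat.log 2 (pathCountTo E r W) := by
  have := lamSym_fst_le_log hacyc (r := r) hvW
  have := lamSym_snd_le_log hacyc (W := W) hrv
  unfold lamPotential
  rw [abs_le]
  omega

end SymCPD

theorem symCPD_light_edges_on_path_le_general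
    {V : Type*} [Fintype V] (E : V → V → Prop) (r : V) (W : Finset V)
    (hacyc : ∀ v : V, ¬ Relation.TransGen E v v)
    (hcov : ∀ v : V, Relation.ReflTransGen E r v ∧ ∃ w ∈ W, Relation.ReflTransGen E v w) :
    ∀ l : List V, l.Chain' E →
      lightEdgeCount E r W l ≤ 2 * Nat.log 2 (pathCountTo E r W) := by
  rintro (_ | ⟨x, t⟩) hl
  · simp [lightEdgeCount]
  have hlight : lightEdgeCount E r W (x :: t) ≤
      ((x :: t).zip t).countP (fun p => lamPotential E r W p.1 < lamPotential E r W p.2) :=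
    List.countP_mono_left fun p _ hp => by
      simpa using (of_decide_eq_true hp).lamPotential_lt hacyc
  have hascents := List.countP_zip_lt_add_le_getLast (lamPotential E r W) x t
    (hl.imp fun _ _ => lamPotential_le_of_edge hacyc)
  set z := (x :: t).getLast (List.cons_ne_nil x t)
  have hx := abs_le.mp (abs_lamPotential_le hacyc (hcov x).1 (hcov x).2)
  have hz := abs_le.mp (abs_lamPotential_le hacyc (hcov z).1 (hcov z).2)
  omega

/-- every directed path in the DAG contains at most
`2 * ⌊log₂ π(r, W)⌋` light edges. -/
theorem symCPD_light_edges_on_path_le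
    {V : Type*} [Fintype V] (E : V → V → Prop) (r : V) (W : Finset V)
    (hacyc : ∀ v : V, ¬ Relation.TransGen E v v)
    (hr_src : ∀ u : V, ¬ E u r)
    (hr_uniq : ∀ v : V, (∀ u : V, ¬ E u v) → v = r)
    (hW : ∀ v : V, v ∈ W ↔ ∀ u : V, ¬ E v u)
    (hcov : ∀ v : V, Relation.ReflTransGen E r v ∧ ∃ w ∈ W, Relation.ReflTransGen E v w) :
    ∀ l : List V, l.Chain' E →
      lightEdgeCount E r W l ≤ 2 * Nat.log 2 (pathCountTo E r W) :=
  symCPD_light_edges_on_path_le_general E r W hacyc hcov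
end

section
/- In the symmetric centroid path decomposition of a finite DAG with unique source r and sink set W, the quantity ⌊log₂ π(r, ·)⌋ is nondecreasing and the quantity ⌊log₂ π(·, W)⌋ is nonincreasing along every directed path, and for every light edge (u,v) at least one of the two strict inequalities ⌊log₂ π(r,u)⌋ < ⌊log₂ π(r,v)⌋ or ⌊log₂ π(v,W)⌋ < ⌊log₂ π(u,W)⌋ holds. -/
open scoped Classical

/-!
For an edge `(u,v)`, appending `v` injects the paths `r ⇝ u` into the paths `r ⇝ v`, and
prepending `u` injects the paths `v ⇝ w` into the paths `u ⇝ w`. Acyclicity over a finite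
vertex set makes all path sets finite, so `π(r,·)` grows and `π(·,W)` shrinks along edges,
and so do their floor-logarithms. If neither floor-logarithm changes, `λ(u) = λ(v)` and the
edge is heavy.
-/

section

variable {V : Type*} {E : V → V → Prop}

theorem List.IsChain.nodup_of_acyclic_s10 {l : List V} (hl : l.IsChain E)
    (hacyc : ∀ v, ¬ Relation.TransGen E v v) : l.Nodup := by
  refine (List.isChain_iff_pairwise.mp (hl.imp fun _ _ => Relation.TransGen.single)).imp ?_
  rintro a _ h rfl
  exact hacyc a h

theorem setOf_isDagPath_finite [Fintype V] (hacyc : ∀ v, ¬ Relation.TransGen E v v)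
    (u v : V) : {l : List V | IsDagPath E u v l}.Finite :=
  (List.finite_length_le V (Fintype.card V)).subset fun _ hl =>
    (hl.1.nodup_of_acyclic_s10 hacyc).length_le_card

theorem IsDagPath.ne_nil {u v : V} {l : List V} (hl : IsDagPath E u v l) : l ≠ [] := by
  rintro rfl
  simp [IsDagPath] at hl

theorem IsDagPath.append_edge {r u v : V} {l : List V} (hl : IsDagPath E r u l)
    (huv : E u v) : IsDagPath E r v (l ++ [v]) := by
  have hne := hl.ne_nil
  obtain ⟨hchain, hhead, hlast⟩ := hl
  refine ⟨hchain.append (.singleton v) (by simp_all), ?_, by simp⟩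
  rwa [List.head?_append_of_ne_nil _ hne]

theorem IsDagPath.cons_edge {u v w : V} {l : List V} (hl : IsDagPath E v w l)
    (huv : E u v) : IsDagPath E u w (u :: l) := by
  obtain ⟨a, l', rfl⟩ := List.exists_cons_of_ne_nil hl.ne_nil
  obtain ⟨hchain, hhead, hlast⟩ := hl
  obtain rfl : a = v := Option.some.inj hhead
  exact ⟨hchain.cons_cons huv, rfl, by rwa [List.getLast?_cons_cons]⟩

variable [Fintype V] (hacyc : ∀ v, ¬ Relation.TransGen E v v)
include hacyc

theorem pathCount_le_pathCount_of_edge_right {u v : V} (huv : E u v) (r : V) :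
    pathCount E r u ≤ pathCount E r v :=
  Set.ncard_le_ncard_of_injOn (· ++ [v]) (fun _ hl => hl.append_edge huv)
    (fun _ _ _ _ h => List.append_left_injective [v] h) (setOf_isDagPath_finite hacyc r v)

theorem pathCount_le_pathCount_of_edge_left {u v : V} (huv : E u v) (w : V) :
    pathCount E v w ≤ pathCount E u w :=
  Set.ncard_le_ncard_of_injOn (u :: ·) (fun _ hl => hl.cons_edge huv)
    (fun _ _ _ _ h => List.cons_injective h) (setOf_isDagPath_finite hacyc u w)

theorem pathCountTo_le_pathCountTo_of_edge {u v : V} (huv : E u v) (W : Finset V) :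
    pathCountTo E v W ≤ pathCountTo E u W :=
  Finset.sum_le_sum fun w _ => pathCount_le_pathCount_of_edge_left hacyc huv w

end

theorem symCPD_floor_log_monotone_and_light_strict_general
    {V : Type*} [Fintype V] (E : V → V → Prop) (r : V) (W : Finset V)
    (hacyc : ∀ v : V, ¬ Relation.TransGen E v v) :
    ∀ u v : V, E u v →
      Nat.log 2 (pathCount E r u) ≤ Nat.log 2 (pathCount E r v) ∧
      Nat.log 2 (pathCountTo E v W) ≤ Nat.log 2 (pathCountTo E u W) ∧
      (LightEdge E r W u v →
        Nat.log 2 (pathCount E r u) < Nat.log 2 (pathCount E r v) ∨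
        Nat.log 2 (pathCountTo E v W) < Nat.log 2 (pathCountTo E u W)) := by
  intro u v huv
  have hsource := Nat.log_mono_right (b := 2) (pathCount_le_pathCount_of_edge_right hacyc huv r)
  have hsink := Nat.log_mono_right (b := 2) (pathCountTo_le_pathCountTo_of_edge hacyc huv W)
  refine ⟨hsource, hsink, fun ⟨_, hlight⟩ => ?_⟩
  by_contra! hsame
  exact hlight (Prod.ext (hsource.antisymm hsame.1) (hsame.2.antisymm hsink))

/-- `⌊log₂ π(r,·)⌋` is nondecreasing and `⌊log₂ π(·,W)⌋` is
nonincreasing along every edge (hence along every directed path), and for every light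
edge `(u,v)` at least one of the two inequalities is strict. -/
theorem symCPD_floor_log_monotone_and_light_strict
    {V : Type*} [Fintype V] (E : V → V → Prop) (r : V) (W : Finset V)
    (hacyc : ∀ v : V, ¬ Relation.TransGen E v v)
    (hr_src : ∀ u : V, ¬ E u r)
    (hr_uniq : ∀ v : V, (∀ u : V, ¬ E u v) → v = r)
    (hW : ∀ v : V, v ∈ W ↔ ∀ u : V, ¬ E v u)
    (hcov : ∀ v : V, Relation.ReflTransGen E r v ∧ ∃ w ∈ W, Relation.ReflTransGen E v w) :
    ∀ u v : V, E u v →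
      Nat.log 2 (pathCount E r u) ≤ Nat.log 2 (pathCount E r v) ∧
      Nat.log 2 (pathCountTo E v W) ≤ Nat.log 2 (pathCountTo E u W) ∧
      (LightEdge E r W u v →
        Nat.log 2 (pathCount E r u) < Nat.log 2 (pathCount E r v) ∨
        Nat.log 2 (pathCountTo E v W) < Nat.log 2 (pathCountTo E u W)) :=
  symCPD_floor_log_monotone_and_light_strict_general E r W hacyc
end
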